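/- Let n ≥ 1, m = n + 2, σ ∈ ℝ, and let f : EuclideanSpace ℝ (Fin m) → ℝ be smooth on ℝ^m ∖ {0}, homogeneous of degree σ (f (t • x) = t^σ * f x for all t > 0 and x ≠ 0), and harmonic with respect to the Minkowski wave operator: (□f)(x) = 0 for all x ≠ 0. Then the quadratic Casimir acts as the scalar −2σ(σ+n): for all x ≠ 0, Σ_{i,j} ε i * ε j * (X_{ij}(X_{ij} f))(x) = −2σ(σ+n)·f(x). -/

import Mathlib

open Finset

/-- The Minkowski signature factor: `ε 0 = 1`, `ε i = −1` for `i ≠ 0`. -/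
noncomputable def eps {n : ℕ} (i : Fin (n + 2)) : ℝ := if i = 0 then 1 else -1

/-- The partial derivative `∂_i f(x) = fderiv ℝ f x (Pi.single i 1)`. -/
noncomputable def pd {n : ℕ} (f : EuclideanSpace ℝ (Fin (n + 2)) → ℝ) (i : Fin (n + 2)) :
    EuclideanSpace ℝ (Fin (n + 2)) → ℝ :=
  fun x => fderiv ℝ f x (WithLp.toLp 2 (Pi.single i (1 : ℝ)))

/-- The rotation generator `(X_{ij} f)(x) = (ε i * x i) ∂_j f(x) − (ε j * x j) ∂_i f(x)`. -/
noncomputable def Xop {n : ℕ} (i j : Fin (n + 2))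
    (f : EuclideanSpace ℝ (Fin (n + 2)) → ℝ) :
    EuclideanSpace ℝ (Fin (n + 2)) → ℝ :=
  fun x => (eps i * x i) * pd f j x - (eps j * x j) * pd f i x

/-- The Minkowski wave operator `(□f)(x) = Σ_i ε i * ∂_i(∂_i f)(x)`. -/
noncomputable def box {n : ℕ} (f : EuclideanSpace ℝ (Fin (n + 2)) → ℝ) :
    EuclideanSpace ℝ (Fin (n + 2)) → ℝ :=
  fun x => ∑ i, eps i * pd (pd f i) i x

section Aux

variable {n : ℕ}

lemma aux_eps_cases (i : Fin (n+2)) : eps i = 1 ∨ eps i = -1 := by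
  unfold eps; split <;> simp

lemma aux_diffAt_coord (i : Fin (n+2)) (x : EuclideanSpace ℝ (Fin (n+2))) :
    DifferentiableAt ℝ (fun y : EuclideanSpace ℝ (Fin (n+2)) => (y i : ℝ)) x :=
  (EuclideanSpace.proj (𝕜 := ℝ) (ι := Fin (n+2)) i).differentiableAt

lemma aux_pd_coord (i j : Fin (n+2)) (x : EuclideanSpace ℝ (Fin (n+2))) :
    pd (fun y => y i) j x = if i = j then 1 else 0 := by
  have : (fun y : EuclideanSpace ℝ (Fin (n+2)) => y i) = EuclideanSpace.proj i := rfl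
  rw [pd, this, ContinuousLinearMap.fderiv]
  simp [Pi.single_apply]

lemma aux_pd_sub {g h : EuclideanSpace ℝ (Fin (n+2)) → ℝ} {x} (hg : DifferentiableAt ℝ g x)
    (hh : DifferentiableAt ℝ h x) (i) :
    pd (fun y => g y - h y) i x = pd g i x - pd h i x := by
  simp [pd, fderiv_fun_sub hg hh]

lemma aux_pd_mul {g h : EuclideanSpace ℝ (Fin (n+2)) → ℝ} {x} (hg : DifferentiableAt ℝ g x)
    (hh : DifferentiableAt ℝ h x) (i) :
    pd (fun y => g y * h y) i x = pd g i x * h x + g x * pd h i x := by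
  simp [pd, fderiv_fun_mul hg hh, smul_eq_mul]; ring

lemma aux_pd_const_mul {g : EuclideanSpace ℝ (Fin (n+2)) → ℝ} {x} (hg : DifferentiableAt ℝ g x)
    (c : ℝ) (i) : pd (fun y => c * g y) i x = c * pd g i x := by
  simp [pd, fderiv_const_mul (𝕜 := ℝ) hg c]

lemma aux_contDiffAt_pd {f : EuclideanSpace ℝ (Fin (n+2)) → ℝ} {x}
    (hf : ContDiffAt ℝ (⊤ : ℕ∞) f x) (i) : ContDiffAt ℝ (⊤ : ℕ∞) (pd f i) x :=
  (hf.fderiv_right (m := (⊤ : ℕ∞)) (by simp)).clm_apply contDiffAt_const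

lemma aux_clm_expand (L : EuclideanSpace ℝ (Fin (n+2)) →L[ℝ] ℝ)
    (x : EuclideanSpace ℝ (Fin (n+2))) :
    L x = ∑ k, x k * L (WithLp.toLp 2 (Pi.single k 1)) := by
  conv_lhs => rw [show x = ∑ k, x k • (WithLp.toLp 2 (Pi.single k (1:ℝ)) : EuclideanSpace ℝ (Fin (n+2))) by
    ext j; simp [Finset.sum_apply, Pi.single_apply]]
  rw [map_sum]; simp [smul_eq_mul]

lemma aux_euler {g : EuclideanSpace ℝ (Fin (n+2)) → ℝ} {τ : ℝ}
    {x : EuclideanSpace ℝ (Fin (n+2))} (hx : x ≠ 0) (hg : DifferentiableAt ℝ g x)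
    (hhom : ∀ t : ℝ, 0 < t → ∀ y : EuclideanSpace ℝ (Fin (n+2)), y ≠ 0 →
      g (t • y) = t ^ τ * g y) :
    ∑ k, x k * pd g k x = τ * g x := by
  have key : fderiv ℝ g x x = τ * g x := by
    have hsm : HasDerivAt (fun t : ℝ => t • x) x 1 := by
      simpa using (hasDerivAt_id (1:ℝ)).smul_const x
    have h1 : HasDerivAt (fun t : ℝ => g (t • x)) (fderiv ℝ g x x) 1 := by
      have h0 : HasFDerivAt g (fderiv ℝ g x) ((1:ℝ) • x) := by
        rw [one_smul]; exact hg.hasFDerivAt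
      exact h0.comp_hasDerivAt (1:ℝ) hsm
    have h2 : (fun t : ℝ => g (t • x)) =ᶠ[nhds (1:ℝ)] fun t => t ^ τ * g x := by
      filter_upwards [eventually_gt_nhds zero_lt_one] with t ht
      exact hhom t ht x hx
    have h3 : HasDerivAt (fun t : ℝ => t ^ τ * g x) (τ * g x) 1 := by
      have := (Real.hasDerivAt_rpow_const (x := (1:ℝ)) (p := τ)
        (Or.inl one_ne_zero)).mul_const (g x)
      simpa using this
    exact h1.unique (h3.congr_of_eventuallyEq h2)
  rw [← key]; exact (aux_clm_expand (fderiv ℝ g x) x).symm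

lemma aux_pd_hom {f : EuclideanSpace ℝ (Fin (n+2)) → ℝ} {σ : ℝ}
    (hf : ContDiffOn ℝ (⊤ : ℕ∞) f {x | x ≠ 0})
    (hhom : ∀ t : ℝ, 0 < t → ∀ x : EuclideanSpace ℝ (Fin (n+2)), x ≠ 0 →
      f (t • x) = t ^ σ * f x) (i : Fin (n+2)) :
    ∀ t : ℝ, 0 < t → ∀ y : EuclideanSpace ℝ (Fin (n+2)), y ≠ 0 →
      pd f i (t • y) = t ^ (σ - 1) * pd f i y := by
  intro t ht y hy
  have hopen : IsOpen {x : EuclideanSpace ℝ (Fin (n+2)) | x ≠ 0} := isOpen_ne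
  have hCAt : ∀ z : EuclideanSpace ℝ (Fin (n+2)), z ≠ 0 → ContDiffAt ℝ (⊤ : ℕ∞) f z := fun z hz =>
    hf.contDiffAt (hopen.mem_nhds hz)
  have hty : t • y ≠ 0 := smul_ne_zero (ne_of_gt ht) hy
  have hdty : DifferentiableAt ℝ f (t • y) := (hCAt _ hty).differentiableAt (by simp)
  have hdy : DifferentiableAt ℝ f y := (hCAt _ hy).differentiableAt (by simp)
  have hEv : (fun z : EuclideanSpace ℝ (Fin (n+2)) => f (t • z)) =ᶠ[nhds y]
      fun z => t ^ σ * f z := by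
    filter_upwards [hopen.mem_nhds hy] with z hz
    exact hhom t ht z hz
  have hL : HasFDerivAt (fun z : EuclideanSpace ℝ (Fin (n+2)) => f (t • z))
      ((fderiv ℝ f (t • y)).comp
        (t • ContinuousLinearMap.id ℝ (EuclideanSpace ℝ (Fin (n+2))))) y := by
    have hin : HasFDerivAt (fun z : EuclideanSpace ℝ (Fin (n+2)) => t • z)
        (t • ContinuousLinearMap.id ℝ (EuclideanSpace ℝ (Fin (n+2)))) y :=
      (hasFDerivAt_id y).const_smul t
    exact hdty.hasFDerivAt.comp y hin
  have hR : fderiv ℝ (fun z : EuclideanSpace ℝ (Fin (n+2)) => t ^ σ * f z) y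
      = t ^ σ • fderiv ℝ f y := fderiv_const_mul (𝕜 := ℝ) hdy (t ^ σ)
  have key := Filter.EventuallyEq.fderiv_eq (𝕜 := ℝ) hEv
  rw [hL.fderiv, hR] at key
  have key2 := congrArg (fun L : EuclideanSpace ℝ (Fin (n+2)) →L[ℝ] ℝ =>
    L (WithLp.toLp 2 (Pi.single i (1:ℝ)))) key
  simp only [ContinuousLinearMap.comp_apply, ContinuousLinearMap.smul_apply,
    ContinuousLinearMap.coe_smul', Pi.smul_apply, ContinuousLinearMap.coe_id', id_eq,
    smul_eq_mul] at key2
  have key3 : t * pd f i (t • y) = t ^ σ * pd f i y := by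
    have := (fderiv ℝ f (t • y)).map_smul t (WithLp.toLp 2 (Pi.single i (1:ℝ)))
    rw [this] at key2
    simpa [pd, smul_eq_mul] using key2
  have : pd f i (t • y) = t ^ σ / t * pd f i y := by
    field_simp at key3 ⊢
    linarith [key3]
  rw [this, ← Real.rpow_sub_one (ne_of_gt ht)]

lemma aux_pd_symm {f : EuclideanSpace ℝ (Fin (n+2)) → ℝ}
    (hf : ContDiffOn ℝ (⊤ : ℕ∞) f {x | x ≠ 0}) {x : EuclideanSpace ℝ (Fin (n+2))} (hx : x ≠ 0)
    (i j : Fin (n+2)) : pd (pd f i) j x = pd (pd f j) i x := by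
  have hopen : IsOpen {x : EuclideanSpace ℝ (Fin (n+2)) | x ≠ 0} := isOpen_ne
  have hCAt : ContDiffAt ℝ (⊤ : ℕ∞) f x := hf.contDiffAt (hopen.mem_nhds hx)
  have hsym := hCAt.isSymmSndFDerivAt (n := (⊤ : ℕ∞)) (by rw [minSmoothness_of_isRCLikeNormedField, ← WithTop.coe_ofNat]; exact WithTop.coe_le_coe.mpr le_top)
  have h1 : DifferentiableAt ℝ (fderiv ℝ f) x :=
    (hCAt.fderiv_right (m := (⊤ : ℕ∞)) (by simp)).differentiableAt (by simp)
  have key : ∀ a b : Fin (n+2), pd (pd f a) b x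
      = fderiv ℝ (fderiv ℝ f) x (WithLp.toLp 2 (Pi.single b 1)) (WithLp.toLp 2 (Pi.single a 1)) := by
    intro a b
    have h2 : pd (pd f a) b x
        = fderiv ℝ (fun y => fderiv ℝ f y (WithLp.toLp 2 (Pi.single a (1:ℝ)))) x (WithLp.toLp 2 (Pi.single b 1)) := rfl
    rw [h2, fderiv_clm_apply h1 (differentiableAt_const _)]
    simp
  rw [key i j, key j i]
  exact (hsym _ _).symm

/-- The pointwise algebraic identity for one term of the Casimir sum. -/
lemma aux_term (i j : Fin (n+2)) (x P : Fin (n+2) → ℝ) (D : Fin (n+2) → Fin (n+2) → ℝ)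
    (hsym : D i j = D j i) :
    eps i * eps j *
      ((eps i * x i) * (eps i * ((if i = j then 1 else 0) * P j + x i * D j j)
          - eps j * ((if j = j then 1 else 0) * P i + x j * D i j))
        - (eps j * x j) * (eps i * ((if i = i then 1 else 0) * P j + x i * D j i)
          - eps j * ((if j = i then 1 else 0) * P i + x j * D i i)))
    = (if i = j then 2 * (x i * P i) else 0)
      + (eps i * x i ^ 2) * (eps j * D j j) + (eps j * x j ^ 2) * (eps i * D i i)
      - x i * P i - x j * P j - 2 * (x i * (x j * D i j)) := by
  by_cases hij : i = j
  · subst hij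
    simp only [eq_self_iff_true, if_true]
    rcases aux_eps_cases i with h | h <;> rw [h] <;> ring
  · simp only [eq_self_iff_true, if_true, if_neg hij, if_neg (Ne.symm hij)]
    rw [← hsym]
    rcases aux_eps_cases i with h | h <;> rcases aux_eps_cases j with h' | h' <;>
      rw [h, h'] <;> ring

/-- The final double-sum computation. -/
lemma aux_sum (σ fx : ℝ) (x P : Fin (n+2) → ℝ) (D : Fin (n+2) → Fin (n+2) → ℝ)
    (hE1 : ∑ k, x k * P k = σ * fx)
    (hE2 : ∀ i, ∑ k, x k * D i k = (σ - 1) * P i)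
    (hH : ∑ k, eps k * D k k = 0) :
    ∑ i, ∑ j, ((if i = j then 2 * (x i * P i) else 0)
      + (eps i * x i ^ 2) * (eps j * D j j) + (eps j * x j ^ 2) * (eps i * D i i)
      - x i * P i - x j * P j - 2 * (x i * (x j * D i j)))
    = -2 * σ * (σ + (n : ℝ)) * fx := by
  have hinner : ∀ i, ∑ j, ((if i = j then 2 * (x i * P i) else 0)
      + (eps i * x i ^ 2) * (eps j * D j j) + (eps j * x j ^ 2) * (eps i * D i i)
      - x i * P i - x j * P j - 2 * (x i * (x j * D i j)))
      = (2 - ((n : ℝ) + 2) - 2 * (σ - 1)) * (x i * P i)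
        + (∑ j, eps j * x j ^ 2) * (eps i * D i i) - σ * fx := by
    intro i
    rw [Finset.sum_sub_distrib, Finset.sum_sub_distrib, Finset.sum_sub_distrib,
      Finset.sum_add_distrib, Finset.sum_add_distrib]
    rw [Finset.sum_ite_eq univ i (fun _ => 2 * (x i * P i))]
    rw [← Finset.mul_sum, hH, ← Finset.sum_mul]
    rw [Finset.sum_const, Finset.card_univ, Fintype.card_fin, hE1]
    have h2 : ∑ j, 2 * (x i * (x j * D i j)) = 2 * (x i * ((σ - 1) * P i)) := by
      calc ∑ j, 2 * (x i * (x j * D i j)) = 2 * (x i * ∑ j, x j * D i j) := by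
            rw [Finset.mul_sum, Finset.mul_sum]
        _ = 2 * (x i * ((σ - 1) * P i)) := by rw [hE2 i]
    rw [h2]
    simp only [mem_univ, if_true, nsmul_eq_mul]
    push_cast
    ring
  rw [Finset.sum_congr rfl fun i _ => hinner i]
  rw [Finset.sum_sub_distrib, Finset.sum_add_distrib, Finset.sum_const, ← Finset.mul_sum,
    ← Finset.mul_sum, Finset.card_univ, Fintype.card_fin, hE1, hH]
  simp only [nsmul_eq_mul]
  push_cast
  ring

end Aux

/-- On a function homogeneous of degree `σ` and harmonic away from the origin, the quadratic
Casimir `Σ_{ij} ε i ε j X_{ij} X_{ij}` acts as the scalar `−2σ(σ+n)`. -/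
theorem casimir_on_homogeneous_harmonic (n : ℕ) (hn : 1 ≤ n) (σ : ℝ)
    (f : EuclideanSpace ℝ (Fin (n + 2)) → ℝ)
    (hf : ContDiffOn ℝ (⊤ : ℕ∞) f {x | x ≠ 0})
    (hhom : ∀ t : ℝ, 0 < t → ∀ x : EuclideanSpace ℝ (Fin (n + 2)), x ≠ 0 →
      f (t • x) = t ^ σ * f x)
    (hharm : ∀ x : EuclideanSpace ℝ (Fin (n + 2)), x ≠ 0 → box f x = 0) :
    ∀ x : EuclideanSpace ℝ (Fin (n + 2)), x ≠ 0 →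
      ∑ i, ∑ j, eps i * eps j * Xop i j (Xop i j f) x = -2 * σ * (σ + (n : ℝ)) * f x := by
  intro x hx
  have hopen : IsOpen {x : EuclideanSpace ℝ (Fin (n+2)) | x ≠ 0} := isOpen_ne
  have hCAt : ContDiffAt ℝ (⊤ : ℕ∞) f x := hf.contDiffAt (hopen.mem_nhds hx)
  have hdf : DifferentiableAt ℝ f x := hCAt.differentiableAt (by simp)
  have hdpd : ∀ i, DifferentiableAt ℝ (pd f i) x := fun i =>
    (aux_contDiffAt_pd hCAt i).differentiableAt (by simp)
  -- Euler identities
  have hE1 : ∑ k, x k * pd f k x = σ * f x := aux_euler hx hdf hhom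
  have hE2 : ∀ i, ∑ k, x k * pd (pd f i) k x = (σ - 1) * pd f i x := fun i =>
    aux_euler hx (hdpd i) (aux_pd_hom hf hhom i)
  -- harmonicity
  have hH : ∑ k, eps k * pd (pd f k) k x = 0 := hharm x hx
  -- expansion of pd of Xop
  have hpdX : ∀ i j k, pd (Xop i j f) k x =
      eps i * ((if i = k then 1 else 0) * pd f j x + x i * pd (pd f j) k x)
      - eps j * ((if j = k then 1 else 0) * pd f i x + x j * pd (pd f i) k x) := by
    intro i j k
    have dci : ∀ a : Fin (n+2), DifferentiableAt ℝ
        (fun y : EuclideanSpace ℝ (Fin (n+2)) => eps a * y a) x := fun a =>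
      (aux_diffAt_coord a x).const_mul (eps a)
    have h1 : pd (Xop i j f) k x
        = pd (fun y => (eps i * y i) * pd f j y) k x
          - pd (fun y => (eps j * y j) * pd f i y) k x := by
      have hX : Xop i j f = fun y => (eps i * y i) * pd f j y - (eps j * y j) * pd f i y := rfl
      rw [hX, aux_pd_sub (g := fun y => (eps i * y i) * pd f j y)
        (h := fun y => (eps j * y j) * pd f i y) ((dci i).mul (hdpd j)) ((dci j).mul (hdpd i))]
    have h2 : ∀ a b : Fin (n+2), pd (fun y => (eps a * y a) * pd f b y) k x
        = eps a * ((if a = k then 1 else 0) * pd f b x + x a * pd (pd f b) k x) := by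
      intro a b
      rw [aux_pd_mul (dci a) (hdpd b)]
      have h3 : pd (fun y : EuclideanSpace ℝ (Fin (n+2)) => eps a * y a) k x
          = eps a * (if a = k then 1 else 0) := by
        rw [aux_pd_const_mul (aux_diffAt_coord a x), aux_pd_coord]
      rw [h3]; ring
    rw [h1, h2, h2]
  -- per-term canonical form
  have hterm : ∀ i j : Fin (n+2), eps i * eps j * Xop i j (Xop i j f) x
      = (if i = j then 2 * (x i * pd f i x) else 0)
        + (eps i * x i ^ 2) * (eps j * pd (pd f j) j x)
        + (eps j * x j ^ 2) * (eps i * pd (pd f i) i x)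
        - x i * pd f i x - x j * pd f j x
        - 2 * (x i * (x j * pd (pd f i) j x)) := by
    intro i j
    have hXX : Xop i j (Xop i j f) x
        = (eps i * x i) * pd (Xop i j f) j x - (eps j * x j) * pd (Xop i j f) i x := rfl
    rw [hXX, hpdX i j j, hpdX i j i]
    exact aux_term i j (fun k => x k) (fun k => pd f k x)
      (fun a b => pd (pd f a) b x) (aux_pd_symm hf hx i j)
  rw [Finset.sum_congr rfl fun i _ => Finset.sum_congr rfl fun j _ => hterm i j]
  exact aux_sum σ (f x) (fun k => x k) (fun k => pd f k x)
    (fun a b => pd (pd f a) b x) hE1 hE2 hH
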